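/- arXiv:2405.07742 — 6 statements merged into one kernel-verified Lean document; each statement's English description precedes it below -/
import Mathlib

section
/- Let V : ℤ → ℂ and let g ∈ H¹ be real-valued with g_n > 0 for all n ≥ 1. Then for every u ∈ 𝓗₀¹ the identity Σ_{n=1}^∞ V_n |(∇u)_n|² + Σ_{n=1}^∞ [(∂(V·∇g))_n / g_n] |u_n|² = Σ_{n=1}^∞ V_{n+1} |√(g_n/g_{n+1})·u_{n+1} − √(g_{n+1}/g_n)·u_n|² holds (all sums have only finitely many nonzero terms). -/
noncomputable section

open scoped ENNReal

namespace HRB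

/-- discrete gradient `(∇u)_n = u_n - u_{n-1}` -/
def grad (u : ℤ → ℂ) : ℤ → ℂ := fun n => u n - u (n - 1)

/-- discrete divergence (forward difference) `(∂u)_n = u_{n+1} - u_n` -/
def fdiff (u : ℤ → ℂ) : ℤ → ℂ := fun n => u (n + 1) - u n

/-- averaging operator `(Mu)_n = (u_n + u_{n+1})/2` -/
def avg (u : ℤ → ℂ) : ℤ → ℂ := fun n => (u n + u (n + 1)) / 2

/-- negative discrete Laplacian `((-Δ)u)_n = 2u_n - u_{n-1} - u_{n+1}` -/
def negLap (u : ℤ → ℂ) : ℤ → ℂ := fun n => 2 * u n - u (n - 1) - u (n + 1)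

/-- `(-Δ)^{ℓ/2}`: equal to `(-Δ)^m` if `ℓ = 2m` and to `∇ ∘ (-Δ)^m` if `ℓ = 2m+1`. -/
def halfPow (l : ℕ) (u : ℤ → ℂ) : ℤ → ℂ :=
  if l % 2 = 0 then negLap^[l / 2] u else grad (negLap^[l / 2] u)

def gradR (u : ℤ → ℝ) : ℤ → ℝ := fun n => u n - u (n - 1)

def fdiffR (u : ℤ → ℝ) : ℤ → ℝ := fun n => u (n + 1) - u n

def negLapR (u : ℤ → ℝ) : ℤ → ℝ := fun n => 2 * u n - u (n - 1) - u (n + 1)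

/-- `u ∈ H^ℓ` -/
def memH (l : ℤ) (u : ℤ → ℂ) : Prop := ∀ n : ℤ, n < l → u n = 0

/-- `u ∈ 𝓗₀^ℓ`: compactly supported elements of `H^ℓ` -/
def memH0 (l : ℤ) (u : ℤ → ℂ) : Prop :=
  memH l u ∧ ∃ N : ℤ, ∀ n : ℤ, N ≤ n → u n = 0

/-- real-valued sequences in `H^ℓ` -/
def memHR (l : ℤ) (g : ℤ → ℝ) : Prop := ∀ n : ℤ, n < l → g n = 0

/-- `Σ_{n=a}^∞ f(n)` (as an unordered real `tsum`) -/
def qsum (a : ℤ) (f : ℤ → ℝ) : ℝ := ∑' n : ℤ, if a ≤ n then f n else 0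

/-- `Σ_{n=a}^∞ f(n)` as a sum in `ℝ≥0∞` (for nonnegative `f`) -/
def esum (a : ℤ) (f : ℤ → ℝ) : ℝ≥0∞ :=
  ∑' n : ℤ, if a ≤ n then ENNReal.ofReal (f n) else 0

/-- `⌈ℓ/2⌉` -/
def ceilHalf (l : ℕ) : ℤ := (((l + 1) / 2 : ℕ) : ℤ)

/-- `Σ_{n=⌈ℓ/2⌉}^∞ |((-Δ)^{ℓ/2}u)_n|²` -/
def energy (l : ℕ) (u : ℤ → ℂ) : ℝ :=
  qsum (ceilHalf l) fun n => ‖halfPow l u n‖ ^ 2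

def eenergy (l : ℕ) (u : ℤ → ℂ) : ℝ≥0∞ :=
  esum (ceilHalf l) fun n => ‖halfPow l u n‖ ^ 2

/-- `Σ_{n=l}^∞ ρ_n |u_n|²` -/
def wsum (l : ℤ) (ρ : ℤ → ℝ) (u : ℤ → ℂ) : ℝ := qsum l fun n => ρ n * ‖u n‖ ^ 2

def ewsum (l : ℤ) (ρ : ℤ → ℝ) (u : ℤ → ℂ) : ℝ≥0∞ := esum l fun n => ρ n * ‖u n‖ ^ 2

/-- Assumption (A1) -/
def A1 (l : ℕ) (g : ℤ → ℝ) : Prop :=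
  memHR l g ∧ ∀ k : ℕ, k < l → ∀ n : ℤ, (l : ℤ) - (k : ℤ) ≤ n → 0 < fdiffR^[k] g n

/-- Assumption (A2) -/
def A2 (l : ℕ) (g : ℤ → ℝ) : Prop :=
  ∀ k : ℕ, 1 ≤ k → k < l → ∀ n : ℤ, (l : ℤ) + 1 - (k : ℤ) ≤ n →
    0 ≤ negLapR^[l - k] (fdiffR^[k] g) n

/-- Assumption (A2') -/
def A2' (l : ℕ) (g : ℤ → ℝ) : Prop := ∀ n : ℤ, (l : ℤ) ≤ n → 0 ≤ negLapR^[l] g n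

/-- Asymptotic expansion (Exp_s):
`g_n = Σ_{j=0}^{2ℓ} α_j n^{ℓ-j-s} + O(n^{-ℓ-1-s})` as `n → ∞`, with `α_0 ≠ 0`. -/
def ExpS (l : ℕ) (g : ℤ → ℝ) (s : ℝ) : Prop :=
  ∃ α : ℕ → ℝ, α 0 ≠ 0 ∧ ∃ C : ℝ, ∃ N : ℤ, ∀ n : ℤ, N ≤ n →
    |g n - ∑ j ∈ Finset.range (2 * l + 1), α j * (n : ℝ) ^ ((l : ℝ) - (j : ℝ) - s)| ≤
      C * (n : ℝ) ^ (-(l : ℝ) - 1 - s)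

/-- the weight `ρ(g)_n = ((-Δ)^ℓ g)_n / g_n` -/
def rho (l : ℕ) (g : ℤ → ℝ) : ℤ → ℝ := fun n => negLapR^[l] g n / g n

/-- the `n`-th term of the remainder `𝓡_k^{(ℓ)}(g;u)` -/
def remTerm (l k : ℕ) (g : ℤ → ℝ) (u : ℤ → ℂ) : ℤ → ℝ := fun n =>
  (if k + 1 = l then 1
    else negLapR^[l - 1 - k] (fdiffR^[k + 1] g) n / fdiffR^[k + 1] g n) *
  ‖(Real.sqrt (fdiffR^[k] g n / fdiffR^[k] g (n + 1)) : ℂ) * fdiff^[k] u (n + 1) -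
    (Real.sqrt (fdiffR^[k] g (n + 1) / fdiffR^[k] g n) : ℂ) * fdiff^[k] u n‖ ^ 2

/-- the remainder `𝓡_k^{(ℓ)}(g;u)` -/
def rem (l k : ℕ) (g : ℤ → ℝ) (u : ℤ → ℂ) : ℝ :=
  qsum ((l : ℤ) - (k : ℤ)) (remTerm l k g u)

def erem (l k : ℕ) (g : ℤ → ℝ) (u : ℤ → ℂ) : ℝ≥0∞ :=
  esum ((l : ℤ) - (k : ℤ)) (remTerm l k g u)

/-- `ρ` is a discrete Hardy–Rellich–Birman weight for the power `ℓ` -/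
def IsHRBWeight (l : ℕ) (ρ : ℤ → ℝ) : Prop :=
  (∀ n : ℤ, (l : ℤ) ≤ n → 0 ≤ ρ n) ∧
  ∀ u : ℤ → ℂ, memH0 l u → wsum l ρ u ≤ energy l u

/-- criticality of the weight `ρ` -/
def IsCritical (l : ℕ) (ρ : ℤ → ℝ) : Prop :=
  ∀ ρ' : ℤ → ℝ, (∀ n : ℤ, (l : ℤ) ≤ n → 0 ≤ ρ' n) →
    (∀ u : ℤ → ℂ, memH0 l u → wsum l ρ' u ≤ energy l u) →
    (∀ n : ℤ, (l : ℤ) ≤ n → ρ n ≤ ρ' n) →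
    ∀ n : ℤ, (l : ℤ) ≤ n → ρ' n = ρ n

/-- optimality near infinity of the weight `ρ` -/
def IsOptNearInfinity (l : ℕ) (ρ : ℤ → ℝ) : Prop :=
  ∀ M : ℤ, (l : ℤ) ≤ M → ∀ ε : ℝ, 0 < ε →
    ∃ u : ℤ → ℂ, memH0 M u ∧ energy l u < (1 + ε) * wsum l ρ u

/-- non-attainability of the weight `ρ` -/
def IsNonAttainable (l : ℕ) (ρ : ℤ → ℝ) : Prop :=
  ∀ u : ℤ → ℂ, memH l u → ewsum l ρ u ≠ ⊤ → eenergy l u = ewsum l ρ u →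
    u = 0

/-- `g^{(ℓ)}_n = √n ∏_{j=1}^{ℓ-1} (n-j)` for `n ≥ 0`, zero for `n < 0` -/
def gseq (l : ℕ) : ℤ → ℝ := fun n =>
  if n < 0 then 0 else Real.sqrt (n : ℝ) * ∏ j ∈ Finset.Icc 1 (l - 1), ((n : ℝ) - (j : ℝ))

/-- the optimal weight `ρ^{(ℓ)}` -/
def rhoSeq (l : ℕ) : ℤ → ℝ := rho l (gseq l)

/-- `g^{(ℓ)}(q)_n = n^q ∏_{j=1}^{ℓ-1}(n-j)` for `n ≥ 0`, zero for `n < 0` -/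
def gq (l : ℕ) (q : ℝ) : ℤ → ℝ := fun n =>
  if n < 0 then 0 else (n : ℝ) ^ q * ∏ j ∈ Finset.Icc 1 (l - 1), ((n : ℝ) - (j : ℝ))

/-- `h_n = n^{ℓ-1/2}` for `n ≥ 0`, zero for `n < 0` -/
def hseq (l : ℕ) : ℤ → ℝ := fun n =>
  if n < 0 then 0 else (n : ℝ) ^ ((l : ℝ) - 1 / 2)

/-- generalized binomial coefficient `C(ν,m) = ν(ν-1)⋯(ν-m+1)/m!` -/
def genBinom (ν : ℝ) (m : ℕ) : ℝ := (∏ i ∈ Finset.range m, (ν - (i : ℝ))) / (m.factorial : ℝ)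

/-- (signed) Stirling numbers of the first kind `s(n,k)`, extended by `0` for `k ≤ 0` -/
def stirling1 (n : ℕ) (k : ℤ) : ℝ :=
  if k ≤ 0 then 0
  else (-1 : ℝ) ^ (n + k.toNat) *
    ∑ t ∈ (Finset.Icc 1 (n - 1)).powersetCard (n - k.toNat), ∏ i ∈ t, (i : ℝ)

/-- `X_m^{(ℓ)} = Σ_{j=-ℓ}^{ℓ} C(2ℓ,ℓ+j)(-1)^j j^m`, with `X_0^{(ℓ)} = 0` -/
def Xcoef (l m : ℕ) : ℝ :=
  if m = 0 then 0
  else ∑ j ∈ Finset.Icc (-(l : ℤ)) (l : ℤ),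
    (((2 * l).choose ((l : ℤ) + j).toNat : ℕ) : ℝ) * (-1 : ℝ) ^ j * ((j : ℝ)) ^ m

/-- the coefficients `r_k^{(ℓ)}` -/
def rcoef (l k : ℕ) : ℝ :=
  ∑ m ∈ Finset.Icc (2 * l) k,
    genBinom ((l : ℝ) + (m : ℝ) - (k : ℝ) - 1 / 2) m * stirling1 l ((l : ℤ) + (m : ℤ) - (k : ℤ)) *
      Xcoef l m

/-- Pochhammer symbol `(x)_ℓ = x(x+1)⋯(x+ℓ-1)` -/
def poch (x : ℝ) (l : ℕ) : ℝ := ∏ i ∈ Finset.range l, (x + (i : ℝ))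

/-! With `φ_n = V_n (|(∇u)_n|² - (∇g)_n / g_n |u_n|²)` (`flux`), each summand on the right
equals the summands on the left plus `φ_{n+1} - φ_n`: expanding `|s y - t x|²` with `s t = 1`
leaves only the terms `(s² - 1)|y|²` and `(t² - 1)|x|²`. The sum telescopes, and `φ` vanishes
at `n = 1` because `g_0 = u_0 = 0`, and for large `n` because `u` has compact support. -/

lemma sum_Ico_int_sub {M : Type*} [AddCommGroup M] (φ : ℤ → M) {a b : ℤ} (hab : a ≤ b) :
    ∑ n ∈ Finset.Ico a b, (φ (n + 1) - φ n) = φ b - φ a := by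
  induction b, hab using Int.leInduction with
  | base => simp
  | succ b hab ih =>
    rw [← Finset.insert_Ico_right_eq_Ico_add_one hab, Finset.sum_insert Finset.right_notMem_Ico,
      ih]
    abel

lemma tsum_ite_le_eq_sum_Ico {M : Type*} [AddCommMonoid M] [TopologicalSpace M] {f : ℤ → M}
    {N : ℤ} (hf : ∀ n, N ≤ n → f n = 0) (a : ℤ) :
    (∑' n, if a ≤ n then f n else 0) = ∑ n ∈ Finset.Ico a N, f n := by
  rw [tsum_eq_sum (s := Finset.Ico a N)]
  · exact Finset.sum_congr rfl fun n hn => if_pos (Finset.mem_Ico.1 hn).1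
  · intro n hn
    rw [Finset.mem_Ico, not_and_or, not_le, not_lt] at hn
    rcases hn with h | h
    · exact if_neg h.not_ge
    · simp [hf n h]

lemma norm_smul_sub_smul_sq_of_mul_eq_one {E : Type*} [NormedAddCommGroup E]
    [InnerProductSpace ℝ E] {s t : ℝ} (hst : s * t = 1) (x y : E) :
    ‖s • y - t • x‖ ^ 2 = ‖y - x‖ ^ 2 + (s ^ 2 - 1) * ‖y‖ ^ 2 + (t ^ 2 - 1) * ‖x‖ ^ 2 := by
  rw [norm_sub_sq_real, norm_sub_sq_real, real_inner_smul_left, real_inner_smul_right,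
    norm_smul, norm_smul, mul_pow, mul_pow, Real.norm_eq_abs, Real.norm_eq_abs, sq_abs, sq_abs]
  linear_combination (-2 * inner ℝ y x) * hst

def flux (V : ℤ → ℂ) (g : ℤ → ℝ) (u : ℤ → ℂ) (n : ℤ) : ℂ :=
  V n * ((‖grad u n‖ ^ 2 - gradR g n / g n * ‖u n‖ ^ 2 : ℝ) : ℂ)

lemma groundState_summand_eq (V : ℤ → ℂ) {g : ℤ → ℝ} (u : ℤ → ℂ) {n : ℤ} (hgn : 0 < g n)
    (hgn1 : 0 < g (n + 1)) :
    V (n + 1) * (‖(Real.sqrt (g n / g (n + 1)) : ℂ) * u (n + 1) -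
        (Real.sqrt (g (n + 1) / g n) : ℂ) * u n‖ ^ 2 : ℂ) =
      V n * (‖grad u n‖ ^ 2 : ℂ) +
        fdiff (fun m => V m * ((gradR g m : ℝ) : ℂ)) n / (g n : ℂ) * (‖u n‖ ^ 2 : ℂ) +
        (flux V g u (n + 1) - flux V g u n) := by
  have hst : Real.sqrt (g n / g (n + 1)) * Real.sqrt (g (n + 1) / g n) = 1 := by
    rw [← Real.sqrt_mul (div_nonneg hgn.le hgn1.le), div_mul_div_comm, mul_comm (g n),
      div_self (by positivity), Real.sqrt_one]
  have hnorm := norm_smul_sub_smul_sq_of_mul_eq_one hst (u n) (u (n + 1))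
  simp only [Complex.real_smul] at hnorm
  rw [← Complex.ofReal_pow, hnorm, Real.sq_sqrt (div_nonneg hgn.le hgn1.le),
    Real.sq_sqrt (div_nonneg hgn1.le hgn.le)]
  simp only [flux, grad, gradR, fdiff, add_sub_cancel_right]
  have : (g n : ℂ) ≠ 0 := by exact_mod_cast hgn.ne'
  have : (g (n + 1) : ℂ) ≠ 0 := by exact_mod_cast hgn1.ne'
  push_cast
  field_simp
  ring

lemma flux_eq_zero_of_eq_zero (V : ℤ → ℂ) (g : ℤ → ℝ) {u : ℤ → ℂ} {n : ℤ} (hun : u n = 0)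
    (hun' : u (n - 1) = 0) : flux V g u n = 0 := by
  simp [flux, grad, hun, hun']

lemma flux_eq_zero_of_pred_eq_zero (V : ℤ → ℂ) {g : ℤ → ℝ} {u : ℤ → ℂ} {n : ℤ}
    (hg : g (n - 1) = 0) (hgn : g n ≠ 0) (hu : u (n - 1) = 0) : flux V g u n = 0 := by
  simp [flux, grad, gradR, hg, hu, hgn]

/-- Theorem 0: the weighted ground-state identity for the discrete
gradient on the half-line. -/
theorem statement0 (V : ℤ → ℂ) (g : ℤ → ℝ) (hgH : memHR 1 g)
    (hgpos : ∀ n : ℤ, 1 ≤ n → 0 < g n) (u : ℤ → ℂ) (hu : memH0 1 u) :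
    (∑' n : ℤ, if 1 ≤ n then V n * (‖grad u n‖ ^ 2 : ℂ) else 0) +
      (∑' n : ℤ, if 1 ≤ n then
        fdiff (fun m => V m * ((gradR g m : ℝ) : ℂ)) n / ((g n : ℝ) : ℂ) * (‖u n‖ ^ 2 : ℂ)
      else 0) =
    ∑' n : ℤ, if 1 ≤ n then
        V (n + 1) *
          (‖(Real.sqrt (g n / g (n + 1)) : ℂ) * u (n + 1) -
              (Real.sqrt (g (n + 1) / g n) : ℂ) * u n‖ ^ 2 : ℂ)
      else 0 := by
  obtain ⟨huH, N, huN⟩ := hu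
  set b := max N 1 + 1
  have hu_b : ∀ n, b - 1 ≤ n → u n = 0 := fun n hn => huN n (by omega)
  have hflux_b : flux V g u b = 0 :=
    flux_eq_zero_of_eq_zero V g (hu_b b (by omega)) (hu_b (b - 1) le_rfl)
  have hflux_one : flux V g u 1 = 0 :=
    flux_eq_zero_of_pred_eq_zero V (hgH 0 one_pos) (hgpos 1 le_rfl).ne' (huH 0 one_pos)
  rw [tsum_ite_le_eq_sum_Ico (N := b)
      (fun n hn => by simp [grad, hu_b n (by omega), hu_b (n - 1) (by omega)]) 1,
    tsum_ite_le_eq_sum_Ico (N := b) (fun n hn => by simp [hu_b n (by omega)]) 1,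
    tsum_ite_le_eq_sum_Ico (N := b)
      (fun n hn => by simp [hu_b n (by omega), hu_b (n + 1) (by omega)]) 1,
    Finset.sum_congr rfl fun n hn => groundState_summand_eq V u (hgpos n (Finset.mem_Ico.1 hn).1)
      (hgpos (n + 1) (by linarith [(Finset.mem_Ico.1 hn).1])),
    Finset.sum_add_distrib, sum_Ico_int_sub _ (by omega), hflux_b, hflux_one, sub_zero, add_zero,
    Finset.sum_add_distrib]

end HRB
end
end

section
/- Let ℓ ∈ ℕ and suppose g satisfies (A1). Then for all u ∈ 𝓗₀^ℓ the identity Σ_{n=⌈ℓ/2⌉}^∞ |((−Δ)^{ℓ/2}u)_n|² = Σ_{n=ℓ}^∞ [((−Δ)^ℓ g)_n / g_n]·|u_n|² + Σ_{k=0}^{ℓ−1} 𝓡_k^{(ℓ)}(g;u) holds. -/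
noncomputable section

open scoped ENNReal

namespace HRB

/-
Induction on `ℓ`. The energy of order `ℓ + 1` of `u` is the energy of order `ℓ` of `∂u`, and `∂g`
satisfies (A1) for `ℓ`, so the identity for `(∂g, ∂u)` leaves the weighted Dirichlet sum
`Σ wₙ |(∂u)ₙ|²` with `w = (-Δ)^ℓ ∂g / ∂g` (`w = 1` when `ℓ = 0`), while the remainders
`𝓡_k(∂g; ∂u)` are the `𝓡_{k+1}(g; u)`. The ground state representation with respect to `g`,
i.e. the pointwise identity `|y - x|² = |√(a/b) y - √(b/a) x|² + (1 - a/b) |y|² + (1 - b/a) |x|²`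
with `a = gₙ, b = gₙ₊₁`, splits this sum into `𝓡_0(g; u)` plus `Σ ρₙ |uₙ|²`: the coefficient of
`|uₙ|²` collects to `(w_{n-1} (∇g)ₙ - wₙ (∂g)ₙ) / gₙ = ((-Δ)^{ℓ+1} g)ₙ / gₙ`.
-/

lemma norm_sub_sq_eq_norm_sqrt_mul_sub_sq_add {a b : ℝ} (ha : 0 < a) (hb : 0 < b) (x y : ℂ) :
    ‖y - x‖ ^ 2 = ‖(Real.sqrt (a / b) : ℂ) * y - (Real.sqrt (b / a) : ℂ) * x‖ ^ 2
      + (1 - a / b) * ‖y‖ ^ 2 + (1 - b / a) * ‖x‖ ^ 2 := by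
  have hsqrt : Real.sqrt (a / b) * Real.sqrt (b / a) = 1 := by
    rw [← Real.sqrt_mul (by positivity), div_mul_div_comm, mul_comm b, div_self (by positivity),
      Real.sqrt_one]
  simp only [Complex.sq_norm, Complex.normSq_sub, Complex.normSq_mul, Complex.normSq_ofReal,
    Real.mul_self_sqrt (div_nonneg ha.le hb.le), Real.mul_self_sqrt (div_nonneg hb.le ha.le)]
  have hcross : ((Real.sqrt (a / b) : ℂ) * y * (starRingEnd ℂ) ((Real.sqrt (b / a) : ℂ) * x)).re
      = (y * (starRingEnd ℂ) x).re := by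
    rw [map_mul, Complex.conj_ofReal, mul_mul_mul_comm, ← Complex.ofReal_mul, hsqrt,
      Complex.ofReal_one, one_mul]
  rw [hcross]
  field_simp
  ring

section GroundState

variable {a : ℤ} {g V w : ℤ → ℝ} {u : ℤ → ℂ}

lemma qsum_eq_tsum {f : ℤ → ℝ} (hf : ∀ n < a, f n = 0) : qsum a f = ∑' n, f n :=
  tsum_congr fun n => by
    split_ifs with h
    · rfl
    · exact (hf n (not_le.mp h)).symm

lemma memH0.summable (hu : memH0 a u) {f : ℤ → ℝ} (hf : ∀ n, u n = 0 → u (n + 1) = 0 → f n = 0) :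
    Summable f := by
  obtain ⟨hu0, N, huN⟩ := hu
  refine summable_of_ne_finset_zero (s := Finset.Ico (a - 1) N) fun n hn => ?_
  rw [Finset.mem_Ico] at hn
  by_cases h : n < a - 1
  · exact hf n (hu0 n (by omega)) (hu0 (n + 1) (by omega))
  · exact hf n (huN n (by omega)) (huN (n + 1) (by omega))

/-- The summand of `𝓡_k` without its weight, for `(∂^k g, ∂^k u)` in place of `(g, u)`. -/
def groundStateTerm (g : ℤ → ℝ) (u : ℤ → ℂ) (n : ℤ) : ℝ :=
  ‖(Real.sqrt (g n / g (n + 1)) : ℂ) * u (n + 1) - (Real.sqrt (g (n + 1) / g n) : ℂ) * u n‖ ^ 2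

lemma norm_fdiff_sq_eq (hga : g a = 0) (hg : ∀ n, a < n → 0 < g n) (hu : ∀ n ≤ a, u n = 0)
    (n : ℤ) :
    ‖fdiff u n‖ ^ 2 = groundStateTerm g u n
      + (1 - g n / g (n + 1)) * ‖u (n + 1)‖ ^ 2 + (1 - g (n + 1) / g n) * ‖u n‖ ^ 2 := by
  rcases lt_trichotomy n a with hn | rfl | hn
  · simp [groundStateTerm, fdiff, hu n hn.le, hu (n + 1) (by omega)]
  · simp [groundStateTerm, fdiff, hga, hu n le_rfl]
  · exact norm_sub_sq_eq_norm_sqrt_mul_sub_sq_add (hg n hn) (hg (n + 1) (by omega)) _ _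

theorem tsum_mul_norm_fdiff_sq (hga : g a = 0) (hg : ∀ n, a < n → 0 < g n)
    (hw : ∀ n, a < n → w (n - 1) * (g n - g (n - 1)) + w n * (g n - g (n + 1)) = V n * g n)
    (hu : memH0 (a + 1) u) :
    ∑' n, w n * ‖fdiff u n‖ ^ 2 = ∑' n, V n * ‖u n‖ ^ 2 + ∑' n, w n * groundStateTerm g u n := by
  have hu0 : ∀ n ≤ a, u n = 0 := fun n hn => hu.1 n (by omega)
  set A : ℤ → ℝ := fun n => w n * (1 - g n / g (n + 1)) * ‖u (n + 1)‖ ^ 2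
  set B : ℤ → ℝ := fun n => w n * (1 - g (n + 1) / g n) * ‖u n‖ ^ 2
  have hAB : ∀ n, A (n - 1) + B n = V n * ‖u n‖ ^ 2 := by
    intro n
    rcases le_or_gt n a with hn | hn
    · simp [A, B, hu0 n hn]
    · have hgn := (hg n hn).ne'
      simp only [A, B, sub_add_cancel]
      rw [← mul_div_cancel_right₀ (V n) hgn, ← hw n hn]
      field_simp
  have hT : Summable fun n => w n * groundStateTerm g u n :=
    hu.summable fun n h0 h1 => by simp [groundStateTerm, h0, h1]
  have hA : Summable A := hu.summable fun n _ h1 => by simp [A, h1]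
  have hA' : Summable fun n => A (n - 1) := hu.summable fun n h0 _ => by simp [A, h0]
  have hB : Summable B := hu.summable fun n h0 _ => by simp [B, h0]
  calc ∑' n, w n * ‖fdiff u n‖ ^ 2
      = ∑' n, w n * groundStateTerm g u n + (∑' n, A n + ∑' n, B n) := by
        rw [← hA.tsum_add hB, ← hT.tsum_add (hA.add hB)]
        exact tsum_congr fun n => by
          rw [norm_fdiff_sq_eq hga hg hu0 n]
          ring
    _ = ∑' n, V n * ‖u n‖ ^ 2 + ∑' n, w n * groundStateTerm g u n := by
        rw [← (Equiv.subRight (1 : ℤ)).tsum_eq A]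
        simp only [Equiv.subRight_apply]
        rw [← hA'.tsum_add hB, tsum_congr hAB, add_comm]

theorem qsum_mul_norm_fdiff_sq (hga : g a = 0) (hg : ∀ n, a < n → 0 < g n)
    (hw : ∀ n, a < n → w (n - 1) * (g n - g (n - 1)) + w n * (g n - g (n + 1)) = V n * g n)
    (hu : memH0 (a + 1) u) :
    qsum a (fun n => w n * ‖fdiff u n‖ ^ 2)
      = wsum (a + 1) V u + qsum (a + 1) (fun n => w n * groundStateTerm g u n) := by
  have hu0 : ∀ n ≤ a, u n = 0 := fun n hn => hu.1 n (by omega)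
  rw [wsum, qsum_eq_tsum, qsum_eq_tsum, qsum_eq_tsum, tsum_mul_norm_fdiff_sq hga hg hw hu]
  all_goals intro n hn
  · obtain hn | rfl := (by omega : n < a ∨ n = a)
    · simp [groundStateTerm, hu0 n hn.le, hu0 (n + 1) (by omega)]
    · simp [groundStateTerm, hga, hu0 n le_rfl]
  · simp [hu0 n (by omega)]
  · simp [fdiff, hu0 n (by omega), hu0 (n + 1) (by omega)]

end GroundState

lemma commute_negLap_fdiff : Function.Commute negLap fdiff := fun u => funext fun n => by
  show negLap (fdiff u) n = fdiff (negLap u) n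
  simp only [negLap, fdiff, sub_add_cancel, add_sub_cancel_right]
  ring

lemma commute_negLapR_fdiffR : Function.Commute negLapR fdiffR := fun g => funext fun n => by
  show negLapR (fdiffR g) n = fdiffR (negLapR g) n
  simp only [negLapR, fdiffR, sub_add_cancel, add_sub_cancel_right]
  ring

lemma grad_fdiff (u : ℤ → ℂ) : grad (fdiff u) = -negLap u := funext fun n => by
  simp only [grad, fdiff, negLap, sub_add_cancel, Pi.neg_apply]
  ring

lemma qsum_add_one (a : ℤ) (f : ℤ → ℝ) : qsum (a + 1) f = qsum a fun n => f (n + 1) := by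
  rw [qsum, ← (Equiv.addRight (1 : ℤ)).tsum_eq]
  exact tsum_congr fun n => by simp

lemma energy_succ (l : ℕ) (u : ℤ → ℂ) : energy (l + 1) u = energy l (fdiff u) := by
  have hgrad : ∀ v : ℤ → ℂ, ∀ n, grad v (n + 1) = fdiff v n := fun v n => by
    simp [grad, fdiff]
  obtain ⟨m, rfl | rfl⟩ := Nat.even_or_odd' l
  · simp only [energy, halfPow, ceilHalf, show (2 * m + 1) % 2 = 1 by omega,
      show 2 * m % 2 = 0 by omega, show (2 * m + 1) / 2 = m by omega,
      show (2 * m + 1 + 1) / 2 = m + 1 by omega, show 2 * m / 2 = m by omega, one_ne_zero,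
      if_false, if_true, Nat.cast_succ, qsum_add_one, hgrad, commute_negLap_fdiff.iterate_left m u]
  · simp only [energy, halfPow, ceilHalf, show (2 * m + 1) % 2 = 1 by omega,
      show (2 * m + 1 + 1) % 2 = 0 by omega, show (2 * m + 1) / 2 = m by omega,
      show (2 * m + 1 + 1) / 2 = m + 1 by omega, show (2 * m + 1 + 1 + 1) / 2 = m + 1 by omega,
      one_ne_zero, if_false, if_true, commute_negLap_fdiff.iterate_left m u, grad_fdiff,
      Pi.neg_apply, norm_neg, Function.iterate_succ_apply']

lemma negLapR_iterate_succ_apply (l : ℕ) (g : ℤ → ℝ) (n : ℤ) :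
    negLapR^[l + 1] g n = negLapR^[l] (fdiffR g) (n - 1) - negLapR^[l] (fdiffR g) n := by
  rw [commute_negLapR_fdiffR.iterate_left l g, Function.iterate_succ_apply']
  simp only [negLapR, fdiffR, sub_add_cancel]
  ring

lemma rho_fdiffR_recurrence (l : ℕ) {g : ℤ → ℝ} {n : ℤ} (hg : g n ≠ 0)
    (hg₁ : fdiffR g (n - 1) ≠ 0) (hg₂ : fdiffR g n ≠ 0) :
    rho l (fdiffR g) (n - 1) * (g n - g (n - 1)) + rho l (fdiffR g) n * (g n - g (n + 1))
      = rho (l + 1) g n * g n := by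
  have h₁ : g n - g (n - 1) = fdiffR g (n - 1) := by simp [fdiffR]
  have h₂ : g n - g (n + 1) = -fdiffR g n := by simp [fdiffR]
  rw [h₁, h₂, rho, rho, rho, negLapR_iterate_succ_apply]
  field_simp
  ring

lemma A1.pos {l : ℕ} {g : ℤ → ℝ} (h : A1 l g) (hl : l ≠ 0) {n : ℤ} (hn : l ≤ n) : 0 < g n :=
  h.2 0 (Nat.pos_of_ne_zero hl) n (by simpa using hn)

lemma A1.fdiffR {l : ℕ} {g : ℤ → ℝ} (h : A1 (l + 1) g) : A1 l (fdiffR g) := by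
  refine ⟨fun n hn => ?_, fun k hk n hn => ?_⟩
  · simp [HRB.fdiffR, h.1 n (by omega), h.1 (n + 1) (by push_cast; omega)]
  · simpa only [Function.iterate_succ_apply] using h.2 (k + 1) (by omega) n (by push_cast; omega)

lemma memH0.fdiff {a : ℤ} {u : ℤ → ℂ} (hu : memH0 (a + 1) u) : memH0 a (fdiff u) := by
  obtain ⟨hu0, N, huN⟩ := hu
  refine ⟨fun n hn => ?_, N, fun n hn => ?_⟩
  · simp [HRB.fdiff, hu0 n (by omega), hu0 (n + 1) (by omega)]
  · simp [HRB.fdiff, huN n hn, huN (n + 1) (by omega)]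

lemma rem_succ_succ (l k : ℕ) (g : ℤ → ℝ) (u : ℤ → ℂ) :
    rem (l + 1) (k + 1) g u = rem l k (fdiffR g) (fdiff u) := by
  rw [rem, rem, show ((l + 1 : ℕ) : ℤ) - (k + 1 : ℕ) = l - k by push_cast; ring]
  congr 1
  funext n
  simp only [remTerm, Function.iterate_succ_apply, add_left_inj,
    show l + 1 - 1 - (k + 1) = l - 1 - k by omega]

lemma rem_one_zero (g : ℤ → ℝ) (u : ℤ → ℂ) : rem 1 0 g u = qsum 1 (groundStateTerm g u) := by
  rw [rem, Nat.cast_one, Nat.cast_zero, sub_zero]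
  congr 1
  funext n
  simp [remTerm, groundStateTerm]

lemma rem_succ_zero {l : ℕ} (hl : l ≠ 0) (g : ℤ → ℝ) (u : ℤ → ℂ) :
    rem (l + 1) 0 g u = qsum (l + 1) fun n => rho l (fdiffR g) n * groundStateTerm g u n := by
  rw [rem, show ((l + 1 : ℕ) : ℤ) - (0 : ℕ) = l + 1 by push_cast; ring]
  congr 1
  funext n
  simp [remTerm, rho, groundStateTerm, hl]

/-- Theorem 1: the Hardy–Rellich–Birman identity with explicit remainders. -/
theorem statement1 (l : ℕ) (hl : 1 ≤ l) (g : ℤ → ℝ) (hA1 : A1 l g)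
    (u : ℤ → ℂ) (hu : memH0 l u) :
    energy l u = wsum l (rho l g) u + ∑ k ∈ Finset.range l, rem l k g u := by
  induction l, hl using Nat.le_induction generalizing g u with
  | base =>
    have hg : ∀ n : ℤ, 0 < n → 0 < g n := fun n hn => hA1.pos one_ne_zero (by omega)
    have key := qsum_mul_norm_fdiff_sq (a := 0) (w := 1) (V := rho 1 g) (hA1.1 0 one_pos) hg
      (fun n hn => by simp [rho, negLapR, div_mul_cancel₀ _ (hg n hn).ne']; ring) hu
    rw [energy_succ]
    simpa [energy, halfPow, ceilHalf, rem_one_zero] using key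
  | succ l hl ih =>
    have hu' : memH0 ((l : ℤ) + 1) u := by exact_mod_cast hu
    have hg : ∀ n : ℤ, l < n → 0 < g n := fun n hn => hA1.pos (by omega) (by push_cast; omega)
    have hdg : ∀ n : ℤ, l ≤ n → 0 < fdiffR g n := fun n hn => hA1.fdiffR.pos (by omega) hn
    have key := qsum_mul_norm_fdiff_sq (a := l) (hA1.1 l (by push_cast; omega)) hg
      (fun n hn => rho_fdiffR_recurrence l (hg n hn).ne' (hdg (n - 1) (by omega)).ne'
        (hdg n hn.le).ne') hu'
    rw [energy_succ, ih (fdiffR g) hA1.fdiffR (fdiff u) hu'.fdiff, wsum, key, Finset.sum_range_succ',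
      rem_succ_zero (by omega)]
    simp only [rem_succ_succ]
    push_cast
    ring

end HRB
end
end

section
/- For every ℓ ∈ ℕ, the set {(−Δ)^{ℓ/2}u : u ∈ 𝓗₀^ℓ} is dense in 𝓗^{⌈ℓ/2⌉} := H^{⌈ℓ/2⌉} ∩ ℓ²(ℤ) with respect to the ℓ²(ℤ)-norm. Equivalently, if v ∈ 𝓗^{⌈ℓ/2⌉} satisfies ⟨v, (−Δ)^{ℓ/2}u⟩ = 0 for all u ∈ 𝓗₀^ℓ, then v = 0. -/
noncomputable section

open scoped ENNReal

namespace HRB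

/-!
Testing orthogonality against the unit vectors `δ_m`, `m ≥ ℓ`, and summing by parts shows that
the formal adjoint of `(-Δ)^{ℓ/2}` annihilates `v` on `[ℓ, ∞)`: `(-Δ)^k v = 0` there if `ℓ = 2k`,
and `(-Δ)^k ∂v = 0` if `ℓ = 2k + 1`. A solution of `Δw = 0` (resp. `∂w = 0`) on a half-line is
affine (resp. constant), so one that tends to zero at infinity vanishes there; iterating, `v`
vanishes on `[⌈ℓ/2⌉, ∞)`, hence everywhere. Density follows because a subspace `R` of a closed
subspace `H` of a Hilbert space is dense in `H` as soon as `H ∩ Rᗮ = 0`.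
-/

open Filter Function ComplexConjugate Topology

section SummationByParts

variable {u : ℤ → ℂ}

theorem hasFiniteSupport_comp_add (hu : u.HasFiniteSupport) (c : ℤ) :
    (fun n => u (n + c)).HasFiniteSupport :=
  hu.fun_comp_of_injective (add_left_injective c)

theorem hasFiniteSupport_fdiff (hu : u.HasFiniteSupport) : (fdiff u).HasFiniteSupport :=
  (hasFiniteSupport_comp_add hu 1).fun_sub hu

theorem hasFiniteSupport_grad (hu : u.HasFiniteSupport) : (grad u).HasFiniteSupport :=
  hu.fun_sub (hu.fun_comp_of_injective (sub_left_injective (b := 1)))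

theorem negLap_eq_neg_fdiff_grad (u : ℤ → ℂ) : negLap u = -fdiff (grad u) := by
  funext n; simp only [negLap, fdiff, grad, Pi.neg_apply, add_sub_cancel_right]; ring

theorem hasFiniteSupport_iterate_negLap (hu : u.HasFiniteSupport) (k : ℕ) :
    (negLap^[k] u).HasFiniteSupport := by
  induction k with
  | zero => exact hu
  | succ k ih =>
    rw [Function.iterate_succ_apply', negLap_eq_neg_fdiff_grad]
    exact (hasFiniteSupport_fdiff (hasFiniteSupport_grad ih)).neg

theorem tsum_conj_mul_comp_add_sub (v : ℤ → ℂ) (hu : u.HasFiniteSupport) (c : ℤ) :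
    ∑' n, conj (v n) * (u (n + c) - u n) = ∑' n, conj (v (n - c) - v n) * u n := by
  have hshift : ∑' n, conj (v n) * u (n + c) = ∑' n, conj (v (n - c)) * u n := by
    rw [← (Equiv.subRight c).tsum_eq (fun n => conj (v n) * u (n + c))]; simp
  simp only [mul_sub, map_sub, sub_mul]
  rw [Summable.tsum_sub, Summable.tsum_sub, hshift] <;>
    exact summable_of_hasFiniteSupport (by fun_prop (disch := exact add_left_injective c))

theorem tsum_conj_mul_fdiff (v : ℤ → ℂ) (hu : u.HasFiniteSupport) :
    ∑' n, conj (v n) * fdiff u n = -∑' n, conj (grad v n) * u n := by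
  calc ∑' n, conj (v n) * fdiff u n = ∑' n, conj (v (n - 1) - v n) * u n :=
        tsum_conj_mul_comp_add_sub v hu 1
    _ = -∑' n, conj (grad v n) * u n := by
        rw [← tsum_neg]; congr 1; funext n; simp only [grad, map_sub]; ring

theorem tsum_conj_mul_grad (v : ℤ → ℂ) (hu : u.HasFiniteSupport) :
    ∑' n, conj (v n) * grad u n = -∑' n, conj (fdiff v n) * u n := by
  calc ∑' n, conj (v n) * grad u n = -∑' n, conj (v n) * (u (n + -1) - u n) := by
        rw [← tsum_neg]; congr 1; funext n; simp only [grad, ← sub_eq_add_neg]; ring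
    _ = -∑' n, conj (fdiff v n) * u n := by
        simp only [tsum_conj_mul_comp_add_sub v hu, sub_neg_eq_add, fdiff]

theorem tsum_conj_mul_negLap (v : ℤ → ℂ) (hu : u.HasFiniteSupport) :
    ∑' n, conj (v n) * negLap u n = ∑' n, conj (negLap v n) * u n := by
  calc ∑' n, conj (v n) * negLap u n = -∑' n, conj (v n) * fdiff (grad u) n := by
        rw [negLap_eq_neg_fdiff_grad, ← tsum_neg]; simp
    _ = ∑' n, conj (grad v n) * grad u n := by
        rw [tsum_conj_mul_fdiff v (hasFiniteSupport_grad hu), neg_neg]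
    _ = ∑' n, conj (negLap v n) * u n := by
        rw [tsum_conj_mul_grad _ hu, negLap_eq_neg_fdiff_grad, ← tsum_neg]; simp

theorem tsum_conj_mul_iterate_negLap (v : ℤ → ℂ) (hu : u.HasFiniteSupport) (k : ℕ) :
    ∑' n, conj (v n) * negLap^[k] u n = ∑' n, conj (negLap^[k] v n) * u n := by
  induction k generalizing v with
  | zero => rfl
  | succ k ih =>
    rw [Function.iterate_succ_apply', tsum_conj_mul_negLap v (hasFiniteSupport_iterate_negLap hu k),
      ih, ← Function.iterate_succ_apply]

end SummationByParts

section Decay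

variable {z : ℤ → ℂ}

theorem tendsto_fdiff (hz : Tendsto z atTop (𝓝 0)) : Tendsto (fdiff z) atTop (𝓝 0) := by
  have h := (hz.comp (tendsto_atTop_add_const_right _ 1 tendsto_id)).sub hz
  rw [sub_zero] at h
  exact h

theorem tendsto_negLap (hz : Tendsto z atTop (𝓝 0)) : Tendsto (negLap z) atTop (𝓝 0) := by
  have hshift (c : ℤ) : Tendsto (fun n => z (n + c)) atTop (𝓝 0) :=
    hz.comp (tendsto_atTop_add_const_right _ c tendsto_id)
  have h := ((hz.const_mul 2).sub (hshift (-1))).sub (hshift 1)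
  simp only [mul_zero, sub_zero, ← sub_eq_add_neg] at h
  exact h

theorem eq_zero_of_fdiff_eq_zero (hz : Tendsto z atTop (𝓝 0)) {a : ℤ}
    (h : ∀ m ≥ a, fdiff z m = 0) : ∀ m ≥ a, z m = 0 := by
  have hconst : ∀ m ≥ a, z m = z a := by
    refine Int.leInduction rfl fun m hm ih => ?_
    rw [← ih, ← sub_eq_zero]; exact h m hm
  have hlim : Tendsto z atTop (𝓝 (z a)) :=
    tendsto_const_nhds.congr' (eventually_ge_atTop a |>.mono fun m hm => (hconst m hm).symm)
  intro m hm
  rw [hconst m hm, tendsto_nhds_unique hlim hz]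

theorem eq_zero_of_negLap_eq_zero (hz : Tendsto z atTop (𝓝 0)) {a : ℤ}
    (h : ∀ m ≥ a, negLap z m = 0) : ∀ m ≥ a - 1, z m = 0 := by
  refine eq_zero_of_fdiff_eq_zero hz (eq_zero_of_fdiff_eq_zero (tendsto_fdiff hz) fun m hm => ?_)
  have hm' := h (m + 1) (by omega)
  simp only [negLap, fdiff, add_sub_cancel_right] at hm' ⊢
  linear_combination -hm'

theorem eq_zero_of_iterate_negLap_eq_zero (hz : Tendsto z atTop (𝓝 0)) {a : ℤ} (k : ℕ)
    (h : ∀ m ≥ a, negLap^[k] z m = 0) : ∀ m ≥ a - k, z m = 0 := by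
  induction k generalizing z with
  | zero => simpa using h
  | succ k ih =>
    rw [Function.iterate_succ_apply] at h
    intro m hm
    refine eq_zero_of_negLap_eq_zero hz (ih (tendsto_negLap hz) h) m (by push_cast at hm; omega)

theorem tendsto_atTop_zero_of_summable_sq {v : ℤ → ℂ} (h : Summable fun n => ‖v n‖ ^ 2) :
    Tendsto v atTop (𝓝 0) := by
  have hsq : Tendsto (fun n => ‖v n‖ ^ 2) atTop (𝓝 0) :=
    h.tendsto_cofinite_zero.mono_left (Int.cofinite_eq ▸ le_sup_right)
  rw [tendsto_zero_iff_norm_tendsto_zero]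
  simpa [Real.sqrt_sq (norm_nonneg _)] using hsq.sqrt

end Decay

section Orthogonal

theorem halfPow_two_mul (k : ℕ) (u : ℤ → ℂ) : halfPow (2 * k) u = negLap^[k] u := by
  simp [halfPow]

theorem halfPow_two_mul_add_one (k : ℕ) (u : ℤ → ℂ) :
    halfPow (2 * k + 1) u = grad (negLap^[k] u) := by
  simp [halfPow, Nat.add_mod, Nat.add_div]

theorem ceilHalf_two_mul (k : ℕ) : ceilHalf (2 * k) = k := by
  simp only [ceilHalf]; omega

theorem ceilHalf_two_mul_add_one (k : ℕ) : ceilHalf (2 * k + 1) = k + 1 := by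
  simp only [ceilHalf]; omega

theorem memH_negLap {a : ℤ} {u : ℤ → ℂ} (h : memH a u) : memH (a - 1) (negLap u) := fun n hn => by
  simp [negLap, h n (by omega), h (n - 1) (by omega), h (n + 1) (by omega)]

theorem memH_iterate_negLap {a : ℤ} {u : ℤ → ℂ} (h : memH a u) (k : ℕ) :
    memH (a - k) (negLap^[k] u) := by
  induction k with
  | zero => simpa using h
  | succ k ih =>
    rw [Function.iterate_succ_apply', Nat.cast_succ, ← sub_sub]
    exact memH_negLap ih

theorem memH_grad {a : ℤ} {u : ℤ → ℂ} (h : memH a u) : memH a (grad u) := fun n hn => by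
  simp [grad, h n hn, h (n - 1) (by omega)]

theorem memH_halfPow {l : ℕ} {u : ℤ → ℂ} (h : memH l u) : memH (ceilHalf l) (halfPow l u) := by
  obtain ⟨k, rfl | rfl⟩ := Nat.even_or_odd' l
  · rw [halfPow_two_mul, ceilHalf_two_mul]
    convert memH_iterate_negLap h k using 1; push_cast; ring
  · rw [halfPow_two_mul_add_one, ceilHalf_two_mul_add_one]
    convert memH_grad (memH_iterate_negLap h k) using 1; push_cast; ring

theorem hasFiniteSupport_halfPow {u : ℤ → ℂ} (hu : u.HasFiniteSupport) (l : ℕ) :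
    (halfPow l u).HasFiniteSupport := by
  obtain ⟨k, rfl | rfl⟩ := Nat.even_or_odd' l
  · rw [halfPow_two_mul]; exact hasFiniteSupport_iterate_negLap hu k
  · rw [halfPow_two_mul_add_one]; exact hasFiniteSupport_grad (hasFiniteSupport_iterate_negLap hu k)

theorem hasFiniteSupport_of_memH0 {a : ℤ} {u : ℤ → ℂ} (hu : memH0 a u) : u.HasFiniteSupport := by
  obtain ⟨hlow, N, hhigh⟩ := hu
  refine (Set.finite_Icc a N).subset fun n hn => ?_
  by_contra h
  rw [Set.mem_Icc, not_and_or, not_le, not_le] at h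
  exact hn (h.elim (hlow n) fun h => hhigh n h.le)

theorem memH0_single {a m : ℤ} (hm : a ≤ m) : memH0 a (Pi.single m 1) :=
  ⟨fun n hn => Pi.single_eq_of_ne (by omega) _, m + 1, fun n hn => Pi.single_eq_of_ne (by omega) _⟩

theorem tsum_conj_mul_single (w : ℤ → ℂ) (m : ℤ) :
    ∑' n, conj (w n) * Pi.single (M := fun _ => ℂ) m 1 n = conj (w m) := by
  rw [tsum_eq_single m fun n hn => by simp [Pi.single_eq_of_ne hn]]
  simp

theorem iterate_negLap_eq_zero_of_orthogonal {v : ℤ → ℂ} {a : ℤ} (k : ℕ)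
    (horth : ∀ u, memH0 a u → ∑' n, conj (v n) * negLap^[k] u n = 0) :
    ∀ m ≥ a, negLap^[k] v m = 0 := by
  intro m hm
  have h := horth _ (memH0_single hm)
  rwa [tsum_conj_mul_iterate_negLap v (hasFiniteSupport_of_memH0 (memH0_single hm)),
    tsum_conj_mul_single, map_eq_zero] at h

theorem eq_zero_of_orthogonal_halfPow {l : ℕ} {v : ℤ → ℂ} (hv : memH (ceilHalf l) v)
    (hlim : Tendsto v atTop (𝓝 0))
    (horth : ∀ u, memH0 l u → ∑' n, conj (v n) * halfPow l u n = 0) : v = 0 := by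
  suffices h : ∀ m ≥ ceilHalf l, v m = 0 from
    funext fun n => (lt_or_ge n (ceilHalf l)).elim (hv n) (h n)
  obtain ⟨k, rfl | rfl⟩ := Nat.even_or_odd' l
  · simp only [halfPow_two_mul] at horth
    have hv0 := eq_zero_of_iterate_negLap_eq_zero hlim k
      (iterate_negLap_eq_zero_of_orthogonal k horth)
    rw [ceilHalf_two_mul]
    exact fun m hm => hv0 m (by push_cast; omega)
  · have horth' (u : ℤ → ℂ) (hu : memH0 (2 * k + 1 : ℕ) u) :
        ∑' n, conj (fdiff v n) * negLap^[k] u n = 0 := by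
      have h := horth u hu
      rwa [halfPow_two_mul_add_one, tsum_conj_mul_grad v
        (hasFiniteSupport_iterate_negLap (hasFiniteSupport_of_memH0 hu) k), neg_eq_zero] at h
    have hfdiff := eq_zero_of_iterate_negLap_eq_zero (tendsto_fdiff hlim) k
      (iterate_negLap_eq_zero_of_orthogonal k horth')
    rw [ceilHalf_two_mul_add_one]
    exact eq_zero_of_fdiff_eq_zero hlim fun m hm => hfdiff m (by push_cast; omega)

end Orthogonal

theorem Submodule.le_topologicalClosure_of_orthogonal {𝕜 E : Type*} [RCLike 𝕜]
    [NormedAddCommGroup E] [InnerProductSpace 𝕜 E] [CompleteSpace E] {R H : Submodule 𝕜 E}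
    (hH : IsClosed (H : Set E)) (hRH : R ≤ H) (h : ∀ z ∈ H, z ∈ Rᗮ → z = 0) :
    H ≤ R.topologicalClosure := by
  intro x hx
  obtain ⟨y, hy, z, hz, rfl⟩ := R.topologicalClosure.exists_add_mem_mem_orthogonal x
  have hyH : y ∈ H := R.topologicalClosure_minimal hRH hH hy
  rw [h z ((H.add_mem_iff_right hyH).mp hx) (R.orthogonal_closure ▸ hz), add_zero]
  exact hy

theorem lp.norm_sq_eq_tsum {ι : Type*} {G : ι → Type*} [∀ i, NormedAddCommGroup (G i)]
    (f : lp G 2) : ‖f‖ ^ 2 = ∑' i, ‖f i‖ ^ 2 := by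
  have h := lp.norm_rpow_eq_tsum (by norm_num : 0 < (2 : ℝ≥0∞).toReal) f
  norm_cast at h

theorem memℓp_two_of_summable {ι : Type*} {G : ι → Type*} [∀ i, NormedAddCommGroup (G i)]
    {f : ∀ i, G i} (hf : Summable fun i => ‖f i‖ ^ 2) : Memℓp f 2 :=
  memℓp_gen (by norm_cast)

theorem lp.summable_norm_sq {ι : Type*} {G : ι → Type*} [∀ i, NormedAddCommGroup (G i)]
    (f : lp G 2) : Summable fun i => ‖f i‖ ^ 2 := by
  have h := (lp.memℓp f).summable (by norm_num : 0 < (2 : ℝ≥0∞).toReal)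
  norm_cast at h

def memH0Submodule (a : ℤ) : Submodule ℂ (ℤ → ℂ) where
  carrier := {u | memH0 a u}
  zero_mem' := ⟨fun _ _ => rfl, 0, fun _ _ => rfl⟩
  add_mem' := fun ⟨hu, N, hN⟩ ⟨hw, M, hM⟩ =>
    ⟨fun n hn => by simp [hu n hn, hw n hn],
      max N M, fun n hn => by simp [hN n (le_of_max_le_left hn), hM n (le_of_max_le_right hn)]⟩
  smul_mem' := fun c u ⟨hu, N, hN⟩ =>
    ⟨fun n hn => by simp [hu n hn], N, fun n hn => by simp [hN n hn]⟩

def negLapLinear : Module.End ℂ (ℤ → ℂ) where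
  toFun := negLap
  map_add' u w := by funext n; simp only [negLap, Pi.add_apply]; ring
  map_smul' c u := by
    funext n; simp only [negLap, Pi.smul_apply, smul_eq_mul, RingHom.id_apply]; ring

def gradLinear : Module.End ℂ (ℤ → ℂ) where
  toFun := grad
  map_add' u w := by funext n; simp only [grad, Pi.add_apply]; ring
  map_smul' c u := by
    funext n; simp only [grad, Pi.smul_apply, smul_eq_mul, RingHom.id_apply]; ring

def halfPowLinear (l : ℕ) : Module.End ℂ (ℤ → ℂ) :=
  if l % 2 = 0 then negLapLinear ^ (l / 2) else gradLinear * negLapLinear ^ (l / 2)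

theorem coe_halfPowLinear (l : ℕ) : ⇑(halfPowLinear l) = halfPow l := by
  funext u
  unfold halfPowLinear halfPow
  split_ifs <;> simp [Module.End.coe_pow, Module.End.mul_apply] <;> rfl

section Ell2

local notation "ℓ²" => lp (fun _ : ℤ => ℂ) 2

/-- The paper's `𝓗^c = H^c ∩ ℓ²(ℤ)`. -/
def vanishingBelow (c : ℤ) : Submodule ℂ ℓ² where
  carrier := {f | memH c f}
  zero_mem' _ _ := rfl
  add_mem' hf hg n hn := by simp [hf n hn, hg n hn]
  smul_mem' a f hf n hn := by simp [hf n hn]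

theorem isClosed_vanishingBelow (c : ℤ) : IsClosed (vanishingBelow c : Set ℓ²) := by
  simp only [vanishingBelow, Submodule.coe_set_mk, AddSubmonoid.coe_set_mk,
    AddSubsemigroup.coe_set_mk, memH, Set.ofPred_forall]
  exact isClosed_biInter fun n _ => isClosed_eq (lp.evalCLM ℂ _ 2 n).continuous continuous_const

def halfPowRange (l : ℕ) : Submodule ℂ ℓ² where
  carrier := {f | ⇑f ∈ (memH0Submodule l).map (halfPowLinear l)}
  zero_mem' := by simp only [Set.mem_ofPred_eq, lp.coeFn_zero]; exact zero_mem _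
  add_mem' {f g} hf hg := by simp only [Set.mem_ofPred_eq, lp.coeFn_add]; exact add_mem hf hg
  smul_mem' c f hf := by
    simp only [Set.mem_ofPred_eq, lp.coeFn_smul]; exact Submodule.smul_mem _ c hf

theorem mem_halfPowRange {l : ℕ} {f : ℓ²} :
    f ∈ halfPowRange l ↔ ∃ u, memH0 l u ∧ halfPow l u = f := by
  show ⇑f ∈ (memH0Submodule l).map (halfPowLinear l) ↔ _
  rw [Submodule.mem_map, coe_halfPowLinear]
  rfl

theorem vanishingBelow_le_closure_halfPowRange (l : ℕ) :
    vanishingBelow (ceilHalf l) ≤ (halfPowRange l).topologicalClosure := by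
  refine Submodule.le_topologicalClosure_of_orthogonal (isClosed_vanishingBelow _) ?_ ?_
  · intro f hf
    obtain ⟨u, hu, hur⟩ := mem_halfPowRange.mp hf
    show memH _ f
    rw [← hur]
    exact memH_halfPow hu.1
  · intro z hz hzorth
    refine lp.ext (eq_zero_of_orthogonal_halfPow hz
      (tendsto_atTop_zero_of_summable_sq (lp.summable_norm_sq z)) fun u hu => ?_)
    have hr : Memℓp (halfPow l u) 2 :=
      (memℓp_zero (hasFiniteSupport_halfPow (hasFiniteSupport_of_memH0 hu) l)).of_exponent_ge
        zero_le
    have h := (Submodule.mem_orthogonal' _ _).mp hzorth ⟨_, hr⟩ (mem_halfPowRange.mpr ⟨u, hu, rfl⟩)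
    rw [lp.inner_eq_tsum] at h
    simpa [mul_comm] using h

theorem exists_memH0_tsum_norm_sub_halfPow_sq_lt {l : ℕ} {v : ℤ → ℂ} (hv : memH (ceilHalf l) v)
    (hs : Summable fun n => ‖v n‖ ^ 2) {ε : ℝ} (hε : 0 < ε) :
    ∃ u, memH0 l u ∧ ∑' n, ‖v n - halfPow l u n‖ ^ 2 < ε := by
  let vℓ : ℓ² := ⟨v, memℓp_two_of_summable hs⟩
  have hcl : vℓ ∈ closure (halfPowRange l : Set ℓ²) := by
    rw [← Submodule.topologicalClosure_coe]
    exact vanishingBelow_le_closure_halfPowRange l hv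
  obtain ⟨r, hr, hdist⟩ := Metric.mem_closure_iff.mp hcl (√ε) (Real.sqrt_pos.mpr hε)
  obtain ⟨u, hu, hur⟩ := mem_halfPowRange.mp hr
  refine ⟨u, hu, ?_⟩
  calc ∑' n, ‖v n - halfPow l u n‖ ^ 2 = ‖vℓ - r‖ ^ 2 := by
        rw [lp.norm_sq_eq_tsum, hur]; rfl
    _ < √ε ^ 2 := by rw [← dist_eq_norm]; gcongr
    _ = ε := Real.sq_sqrt hε.le

end Ell2

theorem statement13_general (l : ℕ) :
    (∀ v : ℤ → ℂ, memH (ceilHalf l) v → Summable (fun n : ℤ => ‖v n‖ ^ 2) →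
      ∀ ε : ℝ, 0 < ε → ∃ u : ℤ → ℂ, memH0 l u ∧
        ∑' n : ℤ, ‖v n - halfPow l u n‖ ^ 2 < ε) ∧
    (∀ v : ℤ → ℂ, memH (ceilHalf l) v → Summable (fun n : ℤ => ‖v n‖ ^ 2) →
      (∀ u : ℤ → ℂ, memH0 l u → ∑' n : ℤ, (starRingEnd ℂ) (v n) * halfPow l u n = 0) →
      v = 0) :=
  ⟨fun _ hv hs _ hε => exists_memH0_tsum_norm_sub_halfPow_sq_lt hv hs hε,
    fun _ hv hs horth =>
      eq_zero_of_orthogonal_halfPow hv (tendsto_atTop_zero_of_summable_sq hs) horth⟩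

/-- Step 1 of Lemma `extend`: the range of `(-Δ)^{ℓ/2}` on `𝓗₀^ℓ`
is dense in `𝓗^{⌈ℓ/2⌉} = H^{⌈ℓ/2⌉} ∩ ℓ²(ℤ)`; equivalently, any `v ∈ 𝓗^{⌈ℓ/2⌉}`
orthogonal to the range vanishes. -/
theorem statement13 (l : ℕ) (hl : 1 ≤ l) :
    (∀ v : ℤ → ℂ, memH (ceilHalf l) v → Summable (fun n : ℤ => ‖v n‖ ^ 2) →
      ∀ ε : ℝ, 0 < ε → ∃ u : ℤ → ℂ, memH0 l u ∧
        ∑' n : ℤ, ‖v n - halfPow l u n‖ ^ 2 < ε) ∧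
    (∀ v : ℤ → ℂ, memH (ceilHalf l) v → Summable (fun n : ℤ => ‖v n‖ ^ 2) →
      (∀ u : ℤ → ℂ, memH0 l u → ∑' n : ℤ, (starRingEnd ℂ) (v n) * halfPow l u n = 0) →
      v = 0) :=
  statement13_general l

end HRB
end
end

section
/- Let M be the averaging operator (Mu)_n := (u_n + u_{n+1})/2 and ∂ the forward difference (∂u)_n := u_{n+1} − u_n. Then for every m ∈ ℕ₀ and all sequences u, v : ℤ → ℂ, the discrete Leibniz formula ∂^m(uv) = Σ_{j=0}^{m} C(m,j)·(∂^j M^{m−j} u)·(∂^{m−j} M^j v) holds, where uv denotes the pointwise product and C(m,j) is the binomial coefficient. -/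
noncomputable section

open scoped ENNReal

namespace HRB

lemma fdiff_avg_comm : Function.Commute fdiff avg := by
  intro u
  funext n
  simp only [Function.comp_apply, fdiff, avg]
  ring

lemma avg_iter_fdiff (b : ℕ) (u : ℤ → ℂ) :
    avg^[b] (fdiff u) = fdiff (avg^[b] u) :=
  (fdiff_avg_comm.iterate_right b u).symm

lemma fdiff_add (f g : ℤ → ℂ) :
    fdiff (fun k => f k + g k) = fun k => fdiff f k + fdiff g k := by
  funext n; simp only [fdiff]; ring

lemma fdiff_iter_add (m : ℕ) (f g : ℤ → ℂ) :
    fdiff^[m] (fun k => f k + g k) = fun k => fdiff^[m] f k + fdiff^[m] g k := by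
  induction m with
  | zero => simp
  | succ m ih =>
      rw [Function.iterate_succ_apply', ih, fdiff_add]
      funext k
      rw [Function.iterate_succ_apply', Function.iterate_succ_apply']

lemma fdiff_mul (u v : ℤ → ℂ) :
    fdiff (fun k => u k * v k) =
      fun k => fdiff u k * avg v k + avg u k * fdiff v k := by
  funext n; simp only [fdiff, avg]; ring

/-- Lemma 3.3: discrete Leibniz formula
`∂^m(uv) = Σ_{j=0}^m C(m,j) (∂^j M^{m-j}u)(∂^{m-j} M^j v)`. -/
theorem statement15 (m : ℕ) (u v : ℤ → ℂ) (n : ℤ) :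
    fdiff^[m] (fun k => u k * v k) n =
      ∑ j ∈ Finset.range (m + 1),
        (m.choose j : ℂ) * (fdiff^[j] (avg^[m - j] u) n * fdiff^[m - j] (avg^[j] v) n) := by
  induction m generalizing u v with
  | zero => simp
  | succ m ih =>
      rw [Function.iterate_succ_apply, fdiff_mul, fdiff_iter_add]
      simp only []
      rw [ih (fdiff u) (avg v), ih (avg u) (fdiff v)]
      set A : ℕ → ℂ := fun i =>
        fdiff^[i] (avg^[m + 1 - i] u) n * fdiff^[m + 1 - i] (avg^[i] v) n with hA
      have h1 : ∀ j ∈ Finset.range (m + 1),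
          (m.choose j : ℂ) *
            (fdiff^[j] (avg^[m - j] (fdiff u)) n * fdiff^[m - j] (avg^[j] (avg v)) n) =
          (m.choose j : ℂ) * A (j + 1) := by
        intro j hj
        have hj' : j ≤ m := Nat.lt_succ_iff.mp (Finset.mem_range.mp hj)
        have hmj : m + 1 - (j + 1) = m - j := by omega
        rw [avg_iter_fdiff, ← Function.iterate_succ_apply fdiff j,
          ← Function.iterate_succ_apply avg j v, hA]
        simp only [hmj]
      have h2 : ∀ j ∈ Finset.range (m + 1),
          (m.choose j : ℂ) *
            (fdiff^[j] (avg^[m - j] (avg u)) n * fdiff^[m - j] (avg^[j] (fdiff v)) n) =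
          (m.choose j : ℂ) * A j := by
        intro j hj
        have hj' : j ≤ m := Nat.lt_succ_iff.mp (Finset.mem_range.mp hj)
        have hmj : m - j + 1 = m + 1 - j := by omega
        rw [avg_iter_fdiff, ← Function.iterate_succ_apply fdiff (m - j),
          ← Function.iterate_succ_apply avg (m - j) u, hA]
        simp only [Nat.succ_eq_add_one, hmj]
      rw [Finset.sum_congr rfl h1, Finset.sum_congr rfl h2]
      have hP : ∀ i ∈ Finset.range (m + 1),
          (((m + 1).choose (i + 1) : ℕ) : ℂ) * A (i + 1) =
            (m.choose i : ℂ) * A (i + 1) + (m.choose (i + 1) : ℂ) * A (i + 1) := by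
        intro i _
        rw [Nat.choose_succ_succ]
        push_cast
        ring
      rw [Finset.sum_range_succ' (fun j => (((m + 1).choose j : ℕ) : ℂ) * A j) (m + 1),
        Finset.sum_congr rfl hP, Finset.sum_add_distrib,
        Finset.sum_range_succ (fun i => (m.choose (i + 1) : ℂ) * A (i + 1)) m,
        Nat.choose_succ_self]
      rw [Finset.sum_range_succ' (fun j => ((m.choose j : ℕ) : ℂ) * A j) m]
      simp
      ring

end HRB
end
end

section
/- Let ℓ ∈ ℕ and ν ∈ ℝ. For every integer n > ℓ, the series Σ_{m=2ℓ}^∞ C(ν,m)·X_m^{(ℓ)}·n^{ν−m} converges and its sum equals Σ_{j=−ℓ}^{ℓ} C(2ℓ, ℓ+j)·(−1)^j·(n+j)^ν, i.e. the value at n of (−Δ)^ℓ applied to the sequence k ↦ k^ν. If ν > 0, the same convergence and equality hold also for n = ℓ. -/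
noncomputable section

open scoped ENNReal

namespace HRB

/-! The binomial series `(x + j) ^ ν = ∑ₘ C(ν, m) jᵐ x^(ν - m)` converges for `|j| < x`, and also
for `|j| = x` when `ν > 0`, because then `∑ₘ |C(ν, m)| < ∞`. Taking the alternating combination
with weights `C(2ℓ, ℓ + j)` over `|j| ≤ ℓ` turns the `m`-th coefficient into `X_m^{(ℓ)}`, which is a
`2ℓ`-th finite difference of `j ↦ jᵐ` and hence vanishes for `m < 2ℓ`. -/

section BinomialSeries

open Set

lemma genBinom_eq_ringChoose (ν : ℝ) (m : ℕ) : genBinom ν m = Ring.choose ν m := by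
  rw [Ring.choose_eq_smul, genBinom, ← descPochhammer_eval_eq_prod_range, smul_eq_mul,
    div_eq_inv_mul, ← Polynomial.aeval_eq_smeval, Polynomial.aeval_def,
    Polynomial.eval₂_eq_eval_map, descPochhammer_map]

theorem hasSum_genBinom_mul_pow (ν : ℝ) {t : ℝ} (ht : |t| < 1) :
    HasSum (fun m => genBinom ν m * t ^ m) ((1 + t) ^ ν) := by
  have hball : t ∈ Metric.eball (0 : ℝ) 1 := by
    rw [Metric.mem_eball, edist_zero_right, ← ofReal_norm]
    simpa using ht
  simpa [genBinom_eq_ringChoose, binomialSeries, mul_comm] using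
    Real.one_add_rpow_hasFPowerSeriesOnBall_zero.hasSum hball

lemma genBinom_succ_mul (ν : ℝ) (m : ℕ) :
    genBinom ν (m + 1) * (m + 1) = genBinom ν m * (ν - m) := by
  rw [genBinom, genBinom, Finset.prod_range_succ, Nat.factorial_succ]
  push_cast
  field_simp

lemma summable_abs_genBinom {ν : ℝ} (hν : 0 < ν) : Summable fun m => |genBinom ν m| := by
  set M := ⌈ν⌉₊
  set c : ℕ → ℝ := fun k => (M + k : ℕ) * |genBinom ν (M + k)|
  -- past `ν` the ratio `C(ν, m + 1) / C(ν, m) = (ν - m) / (m + 1)` is negative, so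
  -- `m |C(ν, m)|` decreases by exactly `ν |C(ν, m)|` at each step
  have hstep (k : ℕ) : ν * |genBinom ν (M + k)| = c k - c (k + 1) := by
    have hνm : ν ≤ (M + k : ℕ) := (Nat.le_ceil ν).trans (by exact_mod_cast Nat.le_add_right M k)
    have h := congrArg abs (genBinom_succ_mul ν (M + k))
    rw [abs_mul, abs_mul, abs_of_pos (show (0 : ℝ) < (M + k : ℕ) + 1 by positivity),
      abs_of_nonpos (show ν - (M + k : ℕ) ≤ 0 by linarith)] at h
    simp only [c, ← add_assoc]
    push_cast at h ⊢
    linarith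
  have hpartial (K : ℕ) : ∑ k ∈ Finset.range K, |genBinom ν (M + k)| ≤ c 0 / ν := by
    have htel : ν * ∑ k ∈ Finset.range K, |genBinom ν (M + k)| = c 0 - c K := by
      rw [Finset.mul_sum, Finset.sum_congr rfl fun k _ => hstep k, Finset.sum_range_sub']
    rw [le_div_iff₀ hν, mul_comm]
    have : 0 ≤ c K := by positivity
    linarith
  rw [← summable_nat_add_iff M]
  simpa only [add_comm] using summable_of_sum_range_le (fun _ => abs_nonneg _) hpartial

theorem hasSum_genBinom_mul_pow_of_pos {ν : ℝ} (hν : 0 < ν) {t : ℝ} (ht : |t| ≤ 1) :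
    HasSum (fun m => genBinom ν m * t ^ m) ((1 + t) ^ ν) := by
  have hbound {s : ℝ} (hs : s ∈ Icc (-1) 1) (m : ℕ) : ‖genBinom ν m * s ^ m‖ ≤ |genBinom ν m| := by
    rw [Real.norm_eq_abs, abs_mul, abs_pow]
    exact mul_le_of_le_one_right (abs_nonneg _) (pow_le_one₀ (abs_nonneg s) (abs_le.mpr hs))
  have htIcc : t ∈ Icc (-1) 1 := abs_le.mp ht
  have hsum : ContinuousOn (fun s => ∑' m, genBinom ν m * s ^ m) (Icc (-1) 1) :=
    continuousOn_tsum (fun m => by fun_prop) (summable_abs_genBinom hν) fun m s hs => hbound hs m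
  have hpow : ContinuousOn (fun s : ℝ => (1 + s) ^ ν) (Icc (-1) 1) :=
    (continuousOn_const.add continuousOn_id).rpow_const fun _ _ => Or.inr hν.le
  have hinterior : EqOn (fun s => ∑' m, genBinom ν m * s ^ m) (fun s => (1 + s) ^ ν)
      (Ioo (-1) 1) := fun s hs => (hasSum_genBinom_mul_pow ν (abs_lt.mpr hs)).tsum_eq
  have heq : ∑' m, genBinom ν m * t ^ m = (1 + t) ^ ν :=
    hinterior.of_subset_closure hsum hpow Ioo_subset_Icc_self
      (by rw [closure_Ioo (by norm_num)]) htIcc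
  rw [← heq]
  exact (Summable.of_norm_bounded (summable_abs_genBinom hν) (hbound htIcc)).hasSum

lemma hasSum_genBinom_mul_pow_mul_rpow {ν x y : ℝ} (hx : 0 < x) (hxy : 0 ≤ x + y)
    (h : HasSum (fun m => genBinom ν m * (y / x) ^ m) ((1 + y / x) ^ ν)) :
    HasSum (fun m : ℕ => genBinom ν m * y ^ m * x ^ (ν - m)) ((x + y) ^ ν) := by
  have hval : (1 + y / x) ^ ν * x ^ ν = (x + y) ^ ν := by
    rw [show 1 + y / x = (x + y) / x by field_simp, Real.div_rpow hxy hx.le,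
      div_mul_cancel₀ _ (Real.rpow_pos_of_pos hx ν).ne']
  refine hval ▸ (h.mul_right (x ^ ν)).congr_fun fun m => ?_
  rw [Real.rpow_sub hx, Real.rpow_natCast, div_pow]
  field_simp

end BinomialSeries

lemma sum_Icc_choose_mul_neg_one_zpow_mul (l : ℕ) (f : ℝ → ℝ) :
    ∑ j ∈ Finset.Icc (-(l : ℤ)) (l : ℤ),
      (((2 * l).choose ((l : ℤ) + j).toNat : ℕ) : ℝ) * (-1 : ℝ) ^ j * f j =
      (-1) ^ l * (fwdDiff 1)^[2 * l] f (-l) := by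
  rw [fwdDiff_iter_eq_sum_shift, Finset.mul_sum]
  refine Finset.sum_nbij' (fun j => ((l : ℤ) + j).toNat) (fun k => (k : ℤ) - l) ?_ ?_ ?_ ?_ ?_
  iterate 4 · intro _ h; simp only [Finset.mem_Icc, Finset.mem_range] at h ⊢; omega
  intro j hj
  rw [Finset.mem_Icc] at hj
  obtain ⟨k, rfl⟩ : ∃ k : ℕ, j = k - l := ⟨((l : ℤ) + j).toNat, by omega⟩
  obtain ⟨r, hr⟩ : ∃ r, 2 * l = k + r := ⟨2 * l - k, by omega⟩
  have hk : ((l : ℤ) + (k - l)).toNat = k := by omega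
  have hsign : (-1 : ℝ) ^ ((k : ℤ) - l) = (-1) ^ l * (-1) ^ r := by
    rw [show (k : ℤ) - l = ((l + r : ℕ) : ℤ) - ((2 * r : ℕ) : ℤ) by push_cast; omega,
      zpow_sub₀ (by norm_num), zpow_natCast, zpow_natCast, pow_mul, neg_one_sq, one_pow,
      div_one, pow_add]
  rw [hk, hr, Nat.add_sub_cancel_left, zsmul_eq_mul, nsmul_eq_mul, hsign]
  push_cast
  ring_nf

lemma sum_Icc_choose_mul_neg_one_zpow_mul_pow_eq_zero {l m : ℕ} (hm : m < 2 * l) :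
    ∑ j ∈ Finset.Icc (-(l : ℤ)) (l : ℤ),
      (((2 * l).choose ((l : ℤ) + j).toNat : ℕ) : ℝ) * (-1 : ℝ) ^ j * ((j : ℝ)) ^ m = 0 := by
  rw [sum_Icc_choose_mul_neg_one_zpow_mul l (· ^ m), fwdDiff_iter_pow_eq_zero_of_lt hm,
    Pi.zero_apply, mul_zero]

lemma Xcoef_eq_zero_of_lt {l m : ℕ} (hm : m < 2 * l) : Xcoef l m = 0 := by
  rw [Xcoef]
  split_ifs
  · rfl
  · exact sum_Icc_choose_mul_neg_one_zpow_mul_pow_eq_zero hm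

lemma Xcoef_eq_sum {l : ℕ} (hl : 1 ≤ l) (m : ℕ) :
    Xcoef l m = ∑ j ∈ Finset.Icc (-(l : ℤ)) (l : ℤ),
      (((2 * l).choose ((l : ℤ) + j).toNat : ℕ) : ℝ) * (-1 : ℝ) ^ j * ((j : ℝ)) ^ m := by
  rw [Xcoef]
  split_ifs with hm
  · rw [hm, sum_Icc_choose_mul_neg_one_zpow_mul_pow_eq_zero (by omega)]
  · rfl

theorem hasSum_genBinom_mul_Xcoef_mul_rpow {l : ℕ} (hl : 1 ≤ l) {ν x : ℝ} (hx : l ≤ x)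
    (hconv : l < x ∨ 0 < ν) :
    HasSum (fun m : ℕ =>
        genBinom ν (m + 2 * l) * Xcoef l (m + 2 * l) * x ^ (ν - ((m + 2 * l : ℕ) : ℝ)))
      (∑ j ∈ Finset.Icc (-(l : ℤ)) (l : ℤ),
        (((2 * l).choose ((l : ℤ) + j).toNat : ℕ) : ℝ) * (-1 : ℝ) ^ j * (x + j) ^ ν) := by
  have hx0 : 0 < x := lt_of_lt_of_le (by exact_mod_cast hl) hx
  have hshift (j : ℤ) (hj : j ∈ Finset.Icc (-(l : ℤ)) l) :
      HasSum (fun m : ℕ => genBinom ν m * (j : ℝ) ^ m * x ^ (ν - m)) ((x + j) ^ ν) := by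
    have hjl : |(j : ℝ)| ≤ l := abs_le.mpr (by rw [Finset.mem_Icc] at hj; exact_mod_cast hj)
    have hjx : |(j : ℝ) / x| = |(j : ℝ)| / x := by rw [abs_div, abs_of_pos hx0]
    refine hasSum_genBinom_mul_pow_mul_rpow hx0 (by linarith [neg_abs_le (j : ℝ)]) ?_
    rcases hconv with hlx | hν
    · exact hasSum_genBinom_mul_pow ν (by rw [hjx, div_lt_one hx0]; linarith)
    · exact hasSum_genBinom_mul_pow_of_pos hν (by rw [hjx, div_le_one hx0]; linarith)
  have hfull : HasSum (fun m : ℕ => genBinom ν m * Xcoef l m * x ^ (ν - m))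
      (∑ j ∈ Finset.Icc (-(l : ℤ)) (l : ℤ),
        (((2 * l).choose ((l : ℤ) + j).toNat : ℕ) : ℝ) * (-1 : ℝ) ^ j * (x + j) ^ ν) := by
    refine (hasSum_sum fun j hj => (hshift j hj).mul_left _).congr_fun fun m => ?_
    rw [Xcoef_eq_sum hl, Finset.mul_sum, Finset.sum_mul]
    exact Finset.sum_congr rfl fun j _ => by ring
  have hlow : ∑ m ∈ Finset.range (2 * l), genBinom ν m * Xcoef l m * x ^ (ν - m) = 0 :=
    Finset.sum_eq_zero fun m hm => by
      rw [Xcoef_eq_zero_of_lt (Finset.mem_range.mp hm), mul_zero, zero_mul]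
  rw [← hasSum_nat_add_iff' (2 * l), hlow, sub_zero] at hfull
  exact hfull

/-- the expansion `(-Δ)^ℓ n^ν = Σ_{m=2ℓ}^∞ C(ν,m) X_m^{(ℓ)} n^{ν-m}`:
convergence and the identity for `n > ℓ`, and also for `n = ℓ` when `ν > 0`. -/
theorem statement16 (l : ℕ) (hl : 1 ≤ l) (ν : ℝ) :
    (∀ n : ℤ, (l : ℤ) < n →
      Summable (fun m : ℕ =>
        genBinom ν (m + 2 * l) * Xcoef l (m + 2 * l) * (n : ℝ) ^ (ν - ((m + 2 * l : ℕ) : ℝ))) ∧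
      (∑' m : ℕ,
        genBinom ν (m + 2 * l) * Xcoef l (m + 2 * l) * (n : ℝ) ^ (ν - ((m + 2 * l : ℕ) : ℝ))) =
        ∑ j ∈ Finset.Icc (-(l : ℤ)) (l : ℤ),
          (((2 * l).choose ((l : ℤ) + j).toNat : ℕ) : ℝ) * (-1 : ℝ) ^ j *
            ((n + j : ℤ) : ℝ) ^ ν) ∧
    (0 < ν →
      Summable (fun m : ℕ =>
        genBinom ν (m + 2 * l) * Xcoef l (m + 2 * l) * (l : ℝ) ^ (ν - ((m + 2 * l : ℕ) : ℝ))) ∧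
      (∑' m : ℕ,
        genBinom ν (m + 2 * l) * Xcoef l (m + 2 * l) * (l : ℝ) ^ (ν - ((m + 2 * l : ℕ) : ℝ))) =
        ∑ j ∈ Finset.Icc (-(l : ℤ)) (l : ℤ),
          (((2 * l).choose ((l : ℤ) + j).toNat : ℕ) : ℝ) * (-1 : ℝ) ^ j *
            (((l : ℤ) + j : ℤ) : ℝ) ^ ν) := by
  constructor
  · intro n hn
    have hnl : (l : ℝ) < n := by exact_mod_cast hn
    have h := hasSum_genBinom_mul_Xcoef_mul_rpow (ν := ν) hl hnl.le (Or.inl hnl)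
    simpa only [Int.cast_add] using And.intro h.summable h.tsum_eq
  · intro hν
    have h := hasSum_genBinom_mul_Xcoef_mul_rpow (x := l) hl le_rfl (Or.inr hν)
    simpa only [Int.cast_add, Int.cast_natCast] using And.intro h.summable h.tsum_eq

end HRB
end
end

section
/- Let ℓ ∈ ℕ and let g^{(ℓ)} be defined by g^{(ℓ)}_n := √n · ∏_{j=1}^{ℓ−1}(n−j) for integers n ≥ 0 and g^{(ℓ)}_n := 0 for n < 0. Then (∂^ℓ g^{(ℓ)})_n > 0 for all integers n ≥ 0, and (∂^k g^{(ℓ)})_n > 0 for all integers n ≥ ℓ−k and all 0 ≤ k < ℓ. In particular g^{(ℓ)} satisfies assumption (A1). -/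
noncomputable section

open scoped ENNReal

namespace HRB

/-!
For `n > 0`, `g^{(ℓ)}_n = F(n)` with `F(x) = √x ∏_{j=1}^{ℓ-1} (x - j)`, and the mean value theorem
gives `(∂^ℓ g)_n = F^{(ℓ)}(ξ)` for some `ξ ≥ n`. Expanding the product, `F` is a sum of powers
`x^{ℓ-i-1/2}` whose coefficients have sign `(-1)^i`; the `ℓ`-th derivative of such a power picks up
exactly `i` negative factors, so every term of `F^{(ℓ)}` is positive on `(0, ∞)`. At `n = 0` the
mean value theorem is not available, but `(∂^ℓ g)_0 = g_ℓ > 0` since `g` vanishes below `ℓ`.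
The lower differences follow by downward induction on `k`: `∂^k g` vanishes at `ℓ - k - 1`, and its
increments `∂^{k+1} g` are positive from there on.
-/

open Finset

section ForwardDifference

variable {u : ℤ → ℝ} {L : ℤ}

theorem fdiffR_eq_fwdDiff : fdiffR = fwdDiff 1 := rfl

theorem iterate_fdiffR_eq_iterate_fwdDiff {F : ℝ → ℝ} {a : ℤ} (h : ∀ m, a ≤ m → u m = F m)
    (k : ℕ) {n : ℤ} (hn : a ≤ n) : fdiffR^[k] u n = (fwdDiff 1)^[k] F n := by
  rw [fdiffR_eq_fwdDiff]
  rw [fwdDiff_iter_eq_sum_shift, fwdDiff_iter_eq_sum_shift]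
  refine sum_congr rfl fun j _ => ?_
  simp only [nsmul_eq_mul, mul_one]
  rw [h _ (by omega)]
  push_cast
  rfl

theorem iterate_fdiffR_eq_zero (hu : memHR L u) {k : ℕ} {n : ℤ} (hn : n + k < L) :
    fdiffR^[k] u n = 0 := by
  rw [fdiffR_eq_fwdDiff]
  rw [fwdDiff_iter_eq_sum_shift]
  refine sum_eq_zero fun j hj => ?_
  have := mem_range.mp hj
  rw [hu _ (by simp; omega), smul_zero]

theorem iterate_fdiffR_apply_sub (hu : memHR L u) (k : ℕ) : fdiffR^[k] u (L - k) = u L := by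
  rw [fdiffR_eq_fwdDiff]
  rw [fwdDiff_iter_eq_sum_shift, sum_range_succ, sum_eq_zero fun j hj => ?_]
  · simp
  · have := mem_range.mp hj
    rw [hu _ (by simp; omega), smul_zero]

theorem iterate_fdiffR_succ_apply (k : ℕ) (n : ℤ) :
    fdiffR^[k + 1] u n = fdiffR^[k] u (n + 1) - fdiffR^[k] u n := by
  rw [Function.iterate_succ_apply', fdiffR]

theorem iterate_fdiffR_pos_of_succ (hu : memHR L u) {k : ℕ}
    (h : ∀ n, L - (k + 1 : ℕ) ≤ n → 0 < fdiffR^[k + 1] u n) :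
    ∀ n, L - k ≤ n → 0 < fdiffR^[k] u n := by
  intro n hn
  induction n, hn using Int.leInduction with
  | base =>
    have hfirst := h (L - k - 1) (by push_cast; omega)
    rwa [iterate_fdiffR_succ_apply, sub_add_cancel,
      iterate_fdiffR_eq_zero hu (n := L - k - 1) (by omega), sub_zero] at hfirst
  | succ n hn ih =>
    have hstep := h n (by push_cast; omega)
    rw [iterate_fdiffR_succ_apply] at hstep
    linarith

theorem iterate_fdiffR_pos_of_le (hu : memHR L u) {m : ℕ}
    (h : ∀ n, L - m ≤ n → 0 < fdiffR^[m] u n) {k : ℕ} (hk : k ≤ m) :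
    ∀ n, L - k ≤ n → 0 < fdiffR^[k] u n := by
  induction hk using Nat.decreasingInduction with
  | self => exact h
  | of_succ k _ ih => exact iterate_fdiffR_pos_of_succ hu ih

end ForwardDifference

theorem exists_iterate_fwdDiff_eq {a : ℝ} {m : ℕ} {f : ℕ → ℝ → ℝ}
    (hf : ∀ k < m, ∀ x, a < x → HasDerivAt (f k) (f (k + 1) x) x) {x : ℝ} (hx : a < x) :
    ∃ ξ ∈ Set.Icc x (x + m), (fwdDiff 1)^[m] (f 0) x = f m ξ := by
  induction m generalizing f with
  | zero => exact ⟨x, by simp, rfl⟩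
  | succ m ih =>
    have hdiff : ∀ k < m, ∀ y, a < y →
        HasDerivAt (fwdDiff 1 (f k)) (fwdDiff 1 (f (k + 1)) y) y := fun k hk y hy =>
      ((hf k (by omega) (y + 1) (by linarith)).comp_add_const y 1).sub (hf k (by omega) y hy)
    obtain ⟨ξ, ⟨hxξ, hξx⟩, hξ⟩ := ih (f := fun k => fwdDiff 1 (f k)) hdiff
    obtain ⟨c, ⟨hξc, hcξ⟩, hc⟩ := exists_hasDerivAt_eq_slope (f m) (f (m + 1))
      (lt_add_one ξ)
      (fun y hy => (hf m (by omega) y (by linarith [hy.1])).continuousAt.continuousWithinAt)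
      (fun y hy => hf m (by omega) y (by linarith [hy.1]))
    refine ⟨c, ⟨by linarith, by push_cast; linarith⟩, ?_⟩
    rw [Function.iterate_succ_apply, hξ, hc, add_sub_cancel_left, div_one]
    rfl

theorem neg_one_pow_mul_descPochhammer_eval_pos {i j : ℕ} {p : ℝ} (h₁ : (j : ℝ) - 1 < p)
    (h₂ : p < j) : 0 < (-1) ^ i * (descPochhammer ℝ (j + i)).eval p := by
  rw [← descPochhammer_mul, Polynomial.eval_mul, Polynomial.eval_comp, Polynomial.eval_sub,
    Polynomial.eval_X, Polynomial.eval_natCast, mul_left_comm,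
    ← ascPochhammer_eval_neg_eq_descPochhammer]
  exact mul_pos (descPochhammer_pos h₁) (ascPochhammer_pos i _ (by linarith))

section RpowSum

variable {ι : Type*} (s : Finset ι) (c p : ι → ℝ)

def rpowSumDeriv (k : ℕ) (x : ℝ) : ℝ :=
  ∑ i ∈ s, c i * (descPochhammer ℝ k).eval (p i) * x ^ (p i - k)

theorem hasDerivAt_rpowSumDeriv (k : ℕ) {x : ℝ} (hx : x ≠ 0) :
    HasDerivAt (rpowSumDeriv s c p k) (rpowSumDeriv s c p (k + 1) x) x := by
  unfold rpowSumDeriv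
  refine HasDerivAt.fun_sum fun i _ => ?_
  refine ((Real.hasDerivAt_rpow_const (Or.inl hx)).const_mul _).congr_deriv ?_
  rw [descPochhammer_succ_eval]
  push_cast
  ring_nf

end RpowSum

-- `√x ∏_{j=1}^{l-1} (x - j)`, with the product expanded over subsets `t` of the roots,
-- differentiated `k` times.
def gseqDeriv (l k : ℕ) : ℝ → ℝ :=
  rpowSumDeriv (Icc 1 (l - 1)).powerset (fun t => ∏ j ∈ t, -(j : ℝ))
    (fun t => ((l - 1 - #t : ℕ) : ℝ) + 1 / 2) k

theorem gseq_eq_gseqDeriv_zero (l : ℕ) {n : ℤ} (hn : 0 ≤ n) : gseq l n = gseqDeriv l 0 n := by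
  have hx : (0 : ℝ) ≤ n := by exact_mod_cast hn
  have hlin : ∏ j ∈ Icc 1 (l - 1), ((n : ℝ) - j) = ∏ j ∈ Icc 1 (l - 1), (-(j : ℝ) + n) :=
    prod_congr rfl fun _ _ => by ring
  simp only [gseq, if_neg (not_lt.2 hn), gseqDeriv, rpowSumDeriv, descPochhammer_zero,
    Polynomial.eval_one, mul_one, Nat.cast_zero, sub_zero]
  rw [hlin, prod_add, mul_sum]
  refine sum_congr rfl fun t ht => ?_
  rw [prod_const, card_sdiff_of_subset (mem_powerset.1 ht), Nat.card_Icc, Nat.add_sub_cancel,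
    Real.rpow_add' hx (by positivity), Real.rpow_natCast, Real.sqrt_eq_rpow]
  ring

theorem gseqDeriv_pos {l : ℕ} (hl : 1 ≤ l) {x : ℝ} (hx : 0 < x) : 0 < gseqDeriv l l x := by
  unfold gseqDeriv rpowSumDeriv
  refine sum_pos (fun t ht => ?_) (powerset_nonempty _)
  have hcard : #t ≤ l - 1 := by simpa using card_le_card (mem_powerset.1 ht)
  have hsign := neg_one_pow_mul_descPochhammer_eval_pos (i := #t) (j := l - 1 - #t + 1)
    (p := ((l - 1 - #t : ℕ) : ℝ) + 1 / 2) (by push_cast; linarith) (by push_cast; linarith)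
  rw [show l - 1 - #t + 1 + #t = l by omega] at hsign
  have hprod : 0 < ∏ j ∈ t, (j : ℝ) := prod_pos fun j hj => by
    have := (mem_Icc.1 (mem_powerset.1 ht hj)).1
    positivity
  beta_reduce
  rw [prod_neg, mul_comm ((-1) ^ #t), mul_assoc (∏ j ∈ t, (j : ℝ))]
  exact mul_pos (mul_pos hprod hsign) (Real.rpow_pos_of_pos hx _)

theorem memHR_gseq (l : ℕ) : memHR l (gseq l) := by
  intro n hn
  unfold gseq
  split_ifs with hneg
  · rfl
  rcases (not_lt.1 hneg).eq_or_lt with h0 | h0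
  · simp [← h0]
  refine mul_eq_zero_of_right _ (prod_eq_zero (i := n.toNat) (mem_Icc.2 ⟨by omega, by omega⟩) ?_)
  rw [sub_eq_zero]
  exact_mod_cast (Int.toNat_of_nonneg h0.le).symm

theorem gseq_pos {l : ℕ} (hl : 1 ≤ l) {n : ℤ} (hn : l ≤ n) : 0 < gseq l n := by
  unfold gseq
  rw [if_neg (by omega)]
  have hln : (l : ℝ) ≤ n := by exact_mod_cast hn
  have hl' : (1 : ℝ) ≤ l := by exact_mod_cast hl
  refine mul_pos (Real.sqrt_pos.2 (by linarith)) (prod_pos fun j hj => ?_)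
  have hj : (j : ℝ) + 1 ≤ l := by exact_mod_cast (by have := (mem_Icc.1 hj).2; omega : j + 1 ≤ l)
  linarith

theorem iterate_fdiffR_gseq_pos {l : ℕ} (hl : 1 ≤ l) {n : ℤ} (hn : 0 ≤ n) :
    0 < fdiffR^[l] (gseq l) n := by
  rcases hn.eq_or_lt with rfl | hn
  · have hfirst := iterate_fdiffR_apply_sub (memHR_gseq l) l
    rw [sub_self] at hfirst
    rw [hfirst]
    exact gseq_pos hl le_rfl
  have hx : (0 : ℝ) < n := by exact_mod_cast hn
  obtain ⟨ξ, hξ, hΔ⟩ := exists_iterate_fwdDiff_eq (f := gseqDeriv l)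
    (fun k _ y hy => hasDerivAt_rpowSumDeriv _ _ _ k hy.ne') hx
  rw [iterate_fdiffR_eq_iterate_fwdDiff (fun m hm => gseq_eq_gseqDeriv_zero l hm) l hn.le, hΔ]
  exact gseqDeriv_pos hl (hx.trans_le hξ.1)

/-- claim (a) of the proof of Theorem 4: positivity of the forward
differences of `g^{(ℓ)}`; in particular `g^{(ℓ)}` satisfies (A1). -/
theorem statement17 (l : ℕ) (hl : 1 ≤ l) :
    (∀ n : ℤ, 0 ≤ n → 0 < fdiffR^[l] (gseq l) n) ∧
    (∀ k : ℕ, k < l → ∀ n : ℤ, (l : ℤ) - (k : ℤ) ≤ n → 0 < fdiffR^[k] (gseq l) n) ∧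
    A1 l (gseq l) := by
  have htop : ∀ n : ℤ, 0 ≤ n → 0 < fdiffR^[l] (gseq l) n := fun _ => iterate_fdiffR_gseq_pos hl
  have hlower : ∀ k : ℕ, k < l → ∀ n : ℤ, (l : ℤ) - k ≤ n → 0 < fdiffR^[k] (gseq l) n :=
    fun k hk => iterate_fdiffR_pos_of_le (memHR_gseq l) (fun n hn => htop n (by omega)) hk.le
  exact ⟨htop, hlower, memHR_gseq l, hlower⟩

end HRB
end
end
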